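/- arXiv:1610.06670 — 3 statements merged into one kernel-verified Lean document; each statement's English description precedes it below -/
import Mathlib

section
/- Let d ≥ 1 and n = 1 + d(d-1)/2. Then there exist linear maps J^i : ℝ^d → ℝ^n for i = 1, …, d with the following three properties: (a) each J^i is an isometry of ℝ^d into ℝ^n, i.e. ⟨J^i u, J^i v⟩ = ⟨u, v⟩ for all u, v ∈ ℝ^d; (b) for each unit vector u ∈ ℝ^d, the vectors J^1 u, …, J^d u are orthonormal in ℝ^n, i.e. ⟨J^i u, J^j u⟩ = δ^{ij}; (c) there is a unit vector e₀ ∈ ℝ^n such that Σ_{i=1}^d u^i (J^i u) = |u|² e₀ for every u = (u^1, …, u^d) ∈ ℝ^d. -/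
/-!
Take `J^i u = (u^i, eᵢ ∧ u) ∈ ℝ ⊕ Λ²ℝ^d`, and `dim Λ²ℝ^d = d(d-1)/2`. From
`⟪eᵢ ∧ u, eⱼ ∧ v⟫ = δ^{ij} ⟪u, v⟫ - u^j v^i` one gets
`⟪J^i u, J^j v⟫ = δ^{ij} ⟪u, v⟫ + (u^i v^j - u^j v^i)`, whose antisymmetric part vanishes when
`i = j` or when `u = v`; this gives (a) and (b). Since `∑ u^i eᵢ ∧ u = u ∧ u = 0`, property (c)
holds with `e₀` the unit vector of the `ℝ` summand.
-/

open scoped RealInnerProductSpace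

abbrev StrictPair (ι : Type*) [LT ι] := {p : ι × ι // p.1 < p.2}

section
variable {ι : Type*} [Fintype ι]

lemma EuclideanSpace.real_inner_eq_sum (x y : EuclideanSpace ℝ ι) :
    ⟪x, y⟫ = ∑ i, x i * y i := by
  simp [PiLp.inner_apply, mul_comm]

variable [LinearOrder ι]

lemma card_strictPair : Fintype.card (StrictPair ι) = (Fintype.card ι).choose 2 := by
  rw [Fintype.card_subtype, Fintype.card_product_filter_lt]

lemma two_mul_sum_strictPair {R : Type*} [NonAssocSemiring R] (F : ι → ι → R)
    (hF : ∀ k l, F k l = F l k) (hdiag : ∀ k, F k k = 0) :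
    2 * ∑ p : StrictPair ι, F p.1.1 p.1.2 = ∑ k, ∑ l, F k l := by
  have hlt : ∑ p : StrictPair ι, F p.1.1 p.1.2 = ∑ k, ∑ l, if k < l then F k l else 0 := by
    rw [← Fintype.sum_prod_type', ← Finset.sum_filter]
    exact (Finset.sum_subtype (p := fun x : ι × ι => x.1 < x.2) _ (fun x => by simp)
      (fun x => F x.1 x.2)).symm
  have hgt : ∑ p : StrictPair ι, F p.1.1 p.1.2 = ∑ k, ∑ l, if l < k then F k l else 0 := by
    rw [hlt, Finset.sum_comm]
    simp_rw [hF]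
  calc 2 * ∑ p : StrictPair ι, F p.1.1 p.1.2
      = ∑ k, ∑ l, ((if k < l then F k l else 0) + if l < k then F k l else 0) := by
        rw [two_mul]
        nth_rw 1 [hlt]
        rw [hgt]
        simp only [← Finset.sum_add_distrib]
    _ = ∑ k, ∑ l, F k l := by
        refine Fintype.sum_congr _ _ fun k => Fintype.sum_congr _ _ fun l => ?_
        rcases lt_trichotomy k l with h | rfl | h
        · simp [h, h.not_gt]
        · simp [hdiag]
        · simp [h, h.not_gt]

end

/-- The coefficient of `e_k ∧ e_l` in `eᵢ ∧ u`. -/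
def wedgeCoeff {ι : Type*} [DecidableEq ι] (i : ι) (u : ι → ℝ) (k l : ι) : ℝ :=
  (if k = i then u l else 0) - (if l = i then u k else 0)

lemma sum_sum_wedgeCoeff_mul {ι : Type*} [Fintype ι] [DecidableEq ι] (i j : ι) (u v : ι → ℝ) :
    ∑ k, ∑ l, wedgeCoeff i u k l * wedgeCoeff j v k l
      = 2 * ((if i = j then ∑ m, u m * v m else 0) - u j * v i) := by
  simp only [wedgeCoeff, sub_mul, mul_sub, ite_mul, mul_ite, zero_mul, mul_zero,
    Finset.sum_sub_distrib, Finset.sum_ite_eq', Finset.mem_univ, if_true]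
  by_cases h : i = j
  · subst h; simp; ring
  · simp [h, Ne.symm h]; ring

section
variable {ι : Type*} [LinearOrder ι]

open EuclideanSpace in
noncomputable def wedgeCoord (i : ι) : Unit ⊕ StrictPair ι → EuclideanSpace ℝ ι →ₗ[ℝ] ℝ
  | .inl _ => projₗ i
  | .inr p => (if p.1.1 = i then projₗ p.1.2 else 0) - (if p.1.2 = i then projₗ p.1.1 else 0)

/-- `u ↦ (u i, eᵢ ∧ u)`, with `Λ²ℝ^ι` in its basis `e_k ∧ e_l`, `k < l`. -/
noncomputable def wedgeEmbedding (i : ι) :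
    EuclideanSpace ℝ ι →ₗ[ℝ] EuclideanSpace ℝ (Unit ⊕ StrictPair ι) :=
  (WithLp.linearEquiv 2 ℝ _).symm.toLinearMap ∘ₗ LinearMap.pi (wedgeCoord i)

@[simp] lemma wedgeEmbedding_inl (i : ι) (u : EuclideanSpace ℝ ι) (x : Unit) :
    wedgeEmbedding i u (.inl x) = u i := rfl

@[simp] lemma wedgeEmbedding_inr (i : ι) (u : EuclideanSpace ℝ ι) (p : StrictPair ι) :
    wedgeEmbedding i u (.inr p) = wedgeCoeff i u p.1.1 p.1.2 := by
  simp [wedgeEmbedding, wedgeCoord, wedgeCoeff,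
    apply_ite (fun f : EuclideanSpace ℝ ι →ₗ[ℝ] ℝ => f u)]

variable [Fintype ι]

lemma inner_wedgeEmbedding (i j : ι) (u v : EuclideanSpace ℝ ι) :
    ⟪wedgeEmbedding i u, wedgeEmbedding j v⟫
      = (if i = j then ⟪u, v⟫ else 0) + (u i * v j - u j * v i) := by
  have hpairs :
      2 * ∑ p : StrictPair ι, wedgeEmbedding i u (.inr p) * wedgeEmbedding j v (.inr p)
        = 2 * ((if i = j then ⟪u, v⟫ else 0) - u j * v i) := by
    simp only [wedgeEmbedding_inr]
    rw [two_mul_sum_strictPair (fun k l => wedgeCoeff i u k l * wedgeCoeff j v k l)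
      (fun k l => by simp only [wedgeCoeff]; ring) (fun k => by simp [wedgeCoeff]),
      sum_sum_wedgeCoeff_mul, EuclideanSpace.real_inner_eq_sum]
  rw [EuclideanSpace.real_inner_eq_sum, Fintype.sum_sum_type]
  simp only [wedgeEmbedding_inl, Finset.univ_unique, Finset.sum_singleton]
  linarith

lemma inner_wedgeEmbedding_same_index (i : ι) (u v : EuclideanSpace ℝ ι) :
    ⟪wedgeEmbedding i u, wedgeEmbedding i v⟫ = ⟪u, v⟫ := by
  simp [inner_wedgeEmbedding]

lemma inner_wedgeEmbedding_same_vector (i j : ι) (u : EuclideanSpace ℝ ι) :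
    ⟪wedgeEmbedding i u, wedgeEmbedding j u⟫ = if i = j then ‖u‖ ^ 2 else 0 := by
  rw [inner_wedgeEmbedding, real_inner_self_eq_norm_sq, mul_comm (u j), sub_self, add_zero]

lemma sum_smul_wedgeEmbedding (u : EuclideanSpace ℝ ι) :
    ∑ i, u i • wedgeEmbedding i u = ‖u‖ ^ 2 • EuclideanSpace.single (.inl ()) 1 := by
  rw [EuclideanSpace.real_norm_sq_eq]
  ext (x | p)
  · simp [sq]
  · simp [wedgeCoeff, mul_sub, Finset.sum_sub_distrib, mul_comm]

end

lemma card_unit_sum_strictPair_fin (d : ℕ) :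
    Fintype.card (Unit ⊕ StrictPair (Fin d)) = 1 + d * (d - 1) / 2 := by
  rw [Fintype.card_sum, card_strictPair, Fintype.card_unit, Fintype.card_fin,
    Nat.choose_two_right]

theorem stmt0_general (d : ℕ) :
    ∃ J : Fin d → (EuclideanSpace ℝ (Fin d) →ₗ[ℝ]
        EuclideanSpace ℝ (Fin (1 + d * (d - 1) / 2))),
      (∀ i, ∀ u v : EuclideanSpace ℝ (Fin d), ⟪J i u, J i v⟫ = ⟪u, v⟫) ∧
      (∀ u : EuclideanSpace ℝ (Fin d), ‖u‖ = 1 →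
        ∀ i j, ⟪J i u, J j u⟫ = if i = j then (1 : ℝ) else 0) ∧
      (∃ e₀ : EuclideanSpace ℝ (Fin (1 + d * (d - 1) / 2)), ‖e₀‖ = 1 ∧
        ∀ u : EuclideanSpace ℝ (Fin d),
          ∑ i, u i • J i u = ‖u‖ ^ 2 • e₀) := by
  let Φ := LinearIsometryEquiv.piLpCongrLeft 2 ℝ ℝ
    (Fintype.equivFinOfCardEq (card_unit_sum_strictPair_fin d))
  refine ⟨fun i => Φ.toLinearEquiv.toLinearMap ∘ₗ wedgeEmbedding i, fun i u v => ?_,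
    fun u hu i j => ?_, Φ (EuclideanSpace.single (.inl ()) 1), by simp, fun u => ?_⟩
  · exact (Φ.inner_map_map _ _).trans (inner_wedgeEmbedding_same_index i u v)
  · simpa [hu] using (Φ.inner_map_map _ _).trans (inner_wedgeEmbedding_same_vector i j u)
  · rw [← map_smul, ← sum_smul_wedgeEmbedding, map_sum]
    simp [map_smul]

/-- For `d ≥ 1` and `n = 1 + d(d-1)/2` there exist linear maps
`J^i : ℝ^d → ℝ^n` (`i = 1, …, d`) such that (a) each `J^i` is an isometry,
(b) for each unit vector `u` the vectors `J^1 u, …, J^d u` are orthonormal,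
and (c) there is a unit vector `e₀` with `∑ i, u^i (J^i u) = |u|² e₀`. -/
theorem stmt0 (d : ℕ) (hd : 1 ≤ d) :
    ∃ J : Fin d → (EuclideanSpace ℝ (Fin d) →ₗ[ℝ]
        EuclideanSpace ℝ (Fin (1 + d * (d - 1) / 2))),
      (∀ i, ∀ u v : EuclideanSpace ℝ (Fin d), ⟪J i u, J i v⟫ = ⟪u, v⟫) ∧
      (∀ u : EuclideanSpace ℝ (Fin d), ‖u‖ = 1 →
        ∀ i j, ⟪J i u, J j u⟫ = if i = j then (1 : ℝ) else 0) ∧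
      (∃ e₀ : EuclideanSpace ℝ (Fin (1 + d * (d - 1) / 2)), ‖e₀‖ = 1 ∧
        ∀ u : EuclideanSpace ℝ (Fin d),
          ∑ i, u i • J i u = ‖u‖ ^ 2 • e₀) :=
  stmt0_general d
end

section
/- Let σ be a symmetric d×d real matrix, let U and Ũ be unit vectors in ℝ^d with σ U = U, and set τ = σ − U ⊗ U, τ̃ = I − Ũ ⊗ Ũ, and ω = U ⊗ Ũ − Ũ ⊗ U + ⟨U, Ũ⟩ I. Then tr(τ̃ τ ω) = ⟨U, Ũ⟩ (tr(σ) − 1). -/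
open Matrix

lemma trace_vecMulVec' {d : ℕ} (u v : Fin d → ℝ) :
    (Matrix.vecMulVec u v).trace = u ⬝ᵥ v := by
  simp [Matrix.trace, Matrix.vecMulVec_apply, Matrix.diag, dotProduct]

lemma mul_vecMulVec' {d : ℕ} (A : Matrix (Fin d) (Fin d) ℝ) (u v : Fin d → ℝ) :
    A * Matrix.vecMulVec u v = Matrix.vecMulVec (A *ᵥ u) v := by
  ext i j
  simp [Matrix.mul_apply, Matrix.vecMulVec_apply, Matrix.mulVec, dotProduct,
    Finset.sum_mul, mul_assoc]

lemma vecMulVec_mul' {d : ℕ} (A : Matrix (Fin d) (Fin d) ℝ) (u v : Fin d → ℝ) :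
    Matrix.vecMulVec u v * A = Matrix.vecMulVec u (v ᵥ* A) := by
  ext i j
  simp [Matrix.mul_apply, Matrix.vecMulVec_apply, Matrix.vecMul, dotProduct,
    Finset.mul_sum, mul_assoc]

lemma vecMulVec_mulVec' {d : ℕ} (u v w : Fin d → ℝ) :
    Matrix.vecMulVec u v *ᵥ w = (v ⬝ᵥ w) • u := by
  ext i
  simp only [Matrix.mulVec, Matrix.vecMulVec_apply, dotProduct, Pi.smul_apply,
    smul_eq_mul, Finset.sum_mul, Finset.mul_sum]
  exact Finset.sum_congr rfl fun x _ => by ring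

/-- For a symmetric matrix `σ`, unit vectors `U, Ũ` with `σ U = U`,
`τ = σ − U ⊗ U`, `τ̃ = I − Ũ ⊗ Ũ`, `ω = U ⊗ Ũ − Ũ ⊗ U + ⟨U, Ũ⟩ I`, one has
`tr(τ̃ τ ω) = ⟨U, Ũ⟩ (tr σ − 1)`. -/
theorem stmt7 (d : ℕ) (σ : Matrix (Fin d) (Fin d) ℝ)
    (hσ : σ.transpose = σ)
    (U Utilde : Fin d → ℝ)
    (hU : U ⬝ᵥ U = 1) (hUt : Utilde ⬝ᵥ Utilde = 1)
    (hσU : σ *ᵥ U = U)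
    (τ τtilde ω : Matrix (Fin d) (Fin d) ℝ)
    (hτ : τ = σ - Matrix.vecMulVec U U)
    (hτt : τtilde = 1 - Matrix.vecMulVec Utilde Utilde)
    (hω : ω = Matrix.vecMulVec U Utilde - Matrix.vecMulVec Utilde U
      + (U ⬝ᵥ Utilde) • (1 : Matrix (Fin d) (Fin d) ℝ)) :
    (τtilde * τ * ω).trace = (U ⬝ᵥ Utilde) * (σ.trace - 1) := by
  have hUσ : U ᵥ* σ = U := by rw [← hσ, vecMul_transpose, hσU]
  subst hτ hτt hω
  simp only [sub_mul, mul_sub, add_mul, mul_add, one_mul, mul_one,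
    smul_mul_assoc, mul_smul_comm, mul_vecMulVec', vecMulVec_mul',
    hσU, hUσ, Matrix.trace_sub, Matrix.trace_add, Matrix.trace_smul,
    trace_vecMulVec', smul_eq_mul]
  have h1 : (Utilde ᵥ* σ) ⬝ᵥ U = Utilde ⬝ᵥ U := by
    rw [← dotProduct_mulVec, hσU]
  have h2 : (σ *ᵥ Utilde) ⬝ᵥ U = U ⬝ᵥ Utilde := by
    rw [dotProduct_comm, dotProduct_mulVec, hUσ]
  have h3 : Utilde ⬝ᵥ (Utilde ᵥ* σ) = (Utilde ᵥ* σ) ⬝ᵥ Utilde := dotProduct_comm _ _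
  simp only [vecMulVec_mulVec', smul_dotProduct, dotProduct_smul, smul_eq_mul,
    h1, h2, h3, hU, hUt, dotProduct_comm Utilde U]
  ring
end

section
/- Let σ be a symmetric d×d real matrix, let U and Ũ be unit vectors in ℝ^d with σ U = U, and set τ = σ − U ⊗ U, τ̃ = I − Ũ ⊗ Ũ, and ω = U ⊗ Ũ − Ũ ⊗ U + ⟨U, Ũ⟩ I. Then (tr(τ²) + tr(τ̃²)) ⟨U, Ũ⟩ − 2 tr(τ̃ τ ω) = tr((σ − I)²) ⟨U, Ũ⟩. -/
open Matrix

variable {d : ℕ}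

lemma trace_vmv (u v : Fin d → ℝ) : (Matrix.vecMulVec u v).trace = u ⬝ᵥ v := by
  simp [Matrix.trace, Matrix.diag, Matrix.vecMulVec_apply, dotProduct]

lemma mul_vmv (A : Matrix (Fin d) (Fin d) ℝ) (u v : Fin d → ℝ) :
    A * Matrix.vecMulVec u v = Matrix.vecMulVec (A *ᵥ u) v := by
  ext i j
  simp [Matrix.mul_apply, Matrix.vecMulVec_apply, Matrix.mulVec, dotProduct,
    Finset.sum_mul, mul_assoc]

lemma vmv_mul (A : Matrix (Fin d) (Fin d) ℝ) (u v : Fin d → ℝ) :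
    Matrix.vecMulVec u v * A = Matrix.vecMulVec u (v ᵥ* A) := by
  ext i j
  simp [Matrix.mul_apply, Matrix.vecMulVec_apply, Matrix.vecMul, dotProduct,
    Finset.mul_sum, mul_assoc]

lemma vecMul_vmv (u v w : Fin d → ℝ) :
    w ᵥ* Matrix.vecMulVec u v = (w ⬝ᵥ u) • v := by
  ext j
  simp [Matrix.vecMul, Matrix.vecMulVec_apply, dotProduct, Finset.sum_mul, mul_assoc]

lemma vmv_mulVec (u v w : Fin d → ℝ) :
    Matrix.vecMulVec u v *ᵥ w = (v ⬝ᵥ w) • u := by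
  ext i
  simp [Matrix.mulVec, Matrix.vecMulVec_apply, dotProduct, Finset.mul_sum,
    mul_comm, mul_assoc, mul_left_comm]

lemma vmv_smul (u v : Fin d → ℝ) (c : ℝ) :
    Matrix.vecMulVec u (c • v) = c • Matrix.vecMulVec u v := by
  ext i j; simp [Matrix.vecMulVec_apply, mul_comm, mul_left_comm]

lemma smul_vmv (u v : Fin d → ℝ) (c : ℝ) :
    Matrix.vecMulVec (c • u) v = c • Matrix.vecMulVec u v := by
  ext i j; simp [Matrix.vecMulVec_apply, mul_assoc]

/-- For a symmetric matrix `σ`, unit vectors `U, Ũ` with `σ U = U`,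
`τ = σ − U ⊗ U`, `τ̃ = I − Ũ ⊗ Ũ`, `ω = U ⊗ Ũ − Ũ ⊗ U + ⟨U, Ũ⟩ I`, one has
`(tr(τ²) + tr(τ̃²)) ⟨U, Ũ⟩ − 2 tr(τ̃ τ ω) = tr((σ − I)²) ⟨U, Ũ⟩`. -/
theorem stmt9 (d : ℕ) (σ : Matrix (Fin d) (Fin d) ℝ)
    (hσ : σ.transpose = σ)
    (U Utilde : Fin d → ℝ)
    (hU : U ⬝ᵥ U = 1) (hUt : Utilde ⬝ᵥ Utilde = 1)
    (hσU : σ *ᵥ U = U)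
    (τ τtilde ω : Matrix (Fin d) (Fin d) ℝ)
    (hτ : τ = σ - Matrix.vecMulVec U U)
    (hτt : τtilde = 1 - Matrix.vecMulVec Utilde Utilde)
    (hω : ω = Matrix.vecMulVec U Utilde - Matrix.vecMulVec Utilde U
      + (U ⬝ᵥ Utilde) • (1 : Matrix (Fin d) (Fin d) ℝ)) :
    ((τ ^ 2).trace + (τtilde ^ 2).trace) * (U ⬝ᵥ Utilde)
      - 2 * (τtilde * τ * ω).trace
      = ((σ - 1) ^ 2).trace * (U ⬝ᵥ Utilde) := by
  have hUσ : U ᵥ* σ = U := by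
    rw [← hσ, Matrix.vecMul_transpose, hσU]
  subst hτ hτt hω
  simp only [pow_two, sub_mul, mul_sub, mul_add, add_mul, mul_one, one_mul,
    Matrix.mul_smul, Matrix.smul_mul, mul_vmv, vmv_mul, smul_smul,
    vecMul_vmv, vmv_mulVec, vmv_smul, smul_vmv,
    Matrix.trace_sub, Matrix.trace_add, Matrix.trace_smul, trace_vmv,
    hσU, hUσ, Matrix.trace_one]
  have hc : Utilde ⬝ᵥ U = U ⬝ᵥ Utilde := dotProduct_comm _ _
  have h1 : Utilde ᵥ* σ ⬝ᵥ U = U ⬝ᵥ Utilde := by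
    rw [← Matrix.dotProduct_mulVec, hσU, hc]
  have h2 : σ *ᵥ Utilde ⬝ᵥ U = U ⬝ᵥ Utilde := by
    rw [dotProduct_comm, Matrix.dotProduct_mulVec, hUσ]
  have h3 : Utilde ⬝ᵥ (Utilde ᵥ* σ) = Utilde ᵥ* σ ⬝ᵥ Utilde := dotProduct_comm _ _
  simp only [smul_eq_mul, hU, hUt, h1, h2, h3, hc]
  ring
end
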